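/- arXiv:2210.01387 — 4 statements merged into one kernel-verified Lean document; each statement's English description precedes it below -/
import Mathlib

section
/- For any intervals X, Y, Z ∈ I(ℝ): if [0,0] ⪯ X ⊖_gH Y, then [0,0] ⊖_gH Z ⪯ (X ⊖_gH Y) ⊖_gH Z. -/
/-- A compact real interval `[lo, hi]` with `lo ≤ hi`. -/
structure IInt where
  lo : ℝ
  hi : ℝ
  isLe : lo ≤ hi

namespace IInt

/-- Dominance order on intervals: `[a,b] ⪯ [c,d]` iff `a ≤ c` and `b ≤ d`. -/
def ile (X Y : IInt) : Prop := X.lo ≤ Y.lo ∧ X.hi ≤ Y.hi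

/-- Interval addition `⊕`. -/
def add (X Y : IInt) : IInt := ⟨X.lo + Y.lo, X.hi + Y.hi, add_le_add X.isLe Y.isLe⟩

/-- gH-difference `⊖_gH`. -/
def gH (X Y : IInt) : IInt :=
  ⟨min (X.lo - Y.lo) (X.hi - Y.hi), max (X.lo - Y.lo) (X.hi - Y.hi), min_le_max⟩

/-- Scalar multiplication `λ ⊙ [a,b]`：`[λa, λb]` for `λ ≥ 0` and `[λb, λa]` for `λ < 0`. -/
def smul (l : ℝ) (X : IInt) : IInt :=
  ⟨min (l * X.lo) (l * X.hi), max (l * X.lo) (l * X.hi), min_le_max⟩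

/-- Inclusion of intervals: `[a,b] ⊆ [c,d]` iff `c ≤ a` and `b ≤ d`. -/
def subset (X Y : IInt) : Prop := Y.lo ≤ X.lo ∧ X.hi ≤ Y.hi

/-- Norm on `I(ℝ)`: `‖[a,b]‖ = max |a| |b|`. -/
def inorm (X : IInt) : ℝ := max |X.lo| |X.hi|

/-- The degenerate interval `[r, r]`. -/
def ofReal (r : ℝ) : IInt := ⟨r, r, le_refl r⟩

/-- Width of an interval. -/
def width (X : IInt) : ℝ := X.hi - X.lo

end IInt

/-- The product `Ĝ⊤ ⊙ d` of an interval vector and a real vector. -/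
def iprod {n : ℕ} (G : Fin n → IInt) (d : EuclideanSpace ℝ (Fin n)) : IInt :=
  ⟨∑ i, min (d i * (G i).lo) (d i * (G i).hi),
   ∑ i, max (d i * (G i).lo) (d i * (G i).hi),
   Finset.sum_le_sum fun _ _ => min_le_max⟩

/-- `(Ĝ, c)` is a gH-weak subgradient of `Φ` at `u` relative to `Y`. -/
def IsWeakSubgrad {n : ℕ} (Y : Set (EuclideanSpace ℝ (Fin n)))
    (Φ : EuclideanSpace ℝ (Fin n) → IInt) (u : EuclideanSpace ℝ (Fin n))
    (G : Fin n → IInt) (c : ℝ) : Prop :=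
  0 ≤ c ∧ ∀ y ∈ Y,
    IInt.ile (IInt.gH (iprod G (y - u)) (IInt.ofReal (c * ‖y - u‖))) (IInt.gH (Φ y) (Φ u))

/-- `(Ĥ, c')` belongs to the augmented normal cone to `Y` at `u`. -/
def InAugNormalCone {n : ℕ} (Y : Set (EuclideanSpace ℝ (Fin n)))
    (u : EuclideanSpace ℝ (Fin n)) (H : Fin n → IInt) (c' : ℝ) : Prop :=
  0 ≤ c' ∧ ∀ y ∈ Y,
    IInt.ile (IInt.gH (iprod H (y - u)) (IInt.ofReal (c' * ‖y - u‖))) (IInt.ofReal 0)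

theorem IInt.gH_mono_left {A B : IInt} (hAB : A.ile B) (Z : IInt) :
    (A.gH Z).ile (B.gH Z) :=
  ⟨min_le_min (sub_le_sub_right hAB.1 _) (sub_le_sub_right hAB.2 _),
    max_le_max (sub_le_sub_right hAB.1 _) (sub_le_sub_right hAB.2 _)⟩

/-- If `[0,0] ⪯ X ⊖_gH Y`, then `[0,0] ⊖_gH Z ⪯ (X ⊖_gH Y) ⊖_gH Z`. -/
theorem stmt_4 (X Y Z : IInt) (h : IInt.ile (IInt.ofReal 0) (IInt.gH X Y)) :
    IInt.ile (IInt.gH (IInt.ofReal 0) Z) (IInt.gH (IInt.gH X Y) Z) :=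
  IInt.gH_mono_left h Z
end

section
/- Let Y ⊆ ℝⁿ be nonempty, Φ : Y → I(ℝ) an interval-valued function, and u ∈ Y. If (Ĝ₁, c₁) and (Ĝ₂, c₂) are gH-weak subgradients of Φ at u and β ∈ [0,1], then (β⊙Ĝ₁ ⊕ (1−β)⊙Ĝ₂, β·c₁ + (1−β)·c₂) is also a gH-weak subgradient of Φ at u; hence the gH-weak subdifferential ∂ʷΦ(u) is a convex set. -/
/-! The product `Ĝ⊤ ⊙ d` is additive and positively homogeneous in `Ĝ`, and
`X ⊖_gH [r, r] ⪯ Z` amounts to the two linear inequalities `X.lo - r ≤ Z.lo`, `X.hi - r ≤ Z.hi`;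
a convex combination of two such pairs of inequalities is again one. -/

attribute [ext] IInt

namespace IInt

theorem smul_of_nonneg {l : ℝ} (hl : 0 ≤ l) (X : IInt) :
    smul l X = ⟨l * X.lo, l * X.hi, mul_le_mul_of_nonneg_left X.isLe hl⟩ := by
  have h : l * X.lo ≤ l * X.hi := mul_le_mul_of_nonneg_left X.isLe hl
  ext
  · exact min_eq_left h
  · exact max_eq_right h

theorem smul_of_nonpos {l : ℝ} (hl : l ≤ 0) (X : IInt) :
    smul l X = ⟨l * X.hi, l * X.lo, mul_le_mul_of_nonpos_left X.isLe hl⟩ := by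
  have h : l * X.hi ≤ l * X.lo := mul_le_mul_of_nonpos_left X.isLe hl
  ext
  · exact min_eq_right h
  · exact max_eq_left h

theorem smul_add (t : ℝ) (X Y : IInt) : smul t (add X Y) = add (smul t X) (smul t Y) := by
  rcases le_total 0 t with ht | ht
  · simp only [smul_of_nonneg ht, add, mul_add]
  · simp only [smul_of_nonpos ht, add, mul_add]

theorem ile_gH_ofReal_iff (X Z : IInt) (r : ℝ) :
    ile (gH X (ofReal r)) Z ↔ X.lo - r ≤ Z.lo ∧ X.hi - r ≤ Z.hi := by
  have h : X.lo - r ≤ X.hi - r := sub_le_sub_right X.isLe r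
  simp only [ile, gH, ofReal, min_eq_left h, max_eq_right h]

theorem ile_gH_ofReal_convex {β : ℝ} (hβ0 : 0 ≤ β) (hβ1 : β ≤ 1) {X₁ X₂ Z : IInt} {r₁ r₂ : ℝ}
    (h₁ : ile (gH X₁ (ofReal r₁)) Z) (h₂ : ile (gH X₂ (ofReal r₂)) Z) :
    ile (gH (add (smul β X₁) (smul (1 - β) X₂)) (ofReal (β * r₁ + (1 - β) * r₂))) Z := by
  rw [ile_gH_ofReal_iff] at h₁ h₂ ⊢
  rw [smul_of_nonneg hβ0, smul_of_nonneg (sub_nonneg.2 hβ1)]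
  constructor <;> dsimp only [add] <;> nlinarith [h₁.1, h₁.2, h₂.1, h₂.2]

end IInt

open IInt

theorem iprod_smul {n : ℕ} {l : ℝ} (hl : 0 ≤ l) (G : Fin n → IInt)
    (d : EuclideanSpace ℝ (Fin n)) :
    iprod (fun i => smul l (G i)) d = smul l (iprod G d) := by
  rw [smul_of_nonneg hl]
  ext <;> simp only [iprod, smul_of_nonneg hl, Finset.mul_sum, mul_left_comm (d _) l,
    mul_min_of_nonneg _ _ hl, mul_max_of_nonneg _ _ hl]

theorem iprod_add {n : ℕ} (G H : Fin n → IInt) (d : EuclideanSpace ℝ (Fin n)) :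
    iprod (fun i => add (G i) (H i)) d = add (iprod G d) (iprod H d) := by
  have key (i : Fin n) := smul_add (d i) (G i) (H i)
  ext <;> simp only [iprod, add, ← Finset.sum_add_distrib]
  · exact Finset.sum_congr rfl fun i _ => congrArg IInt.lo (key i)
  · exact Finset.sum_congr rfl fun i _ => congrArg IInt.hi (key i)

theorem stmt_10_general {n : ℕ} (Y : Set (EuclideanSpace ℝ (Fin n)))
    (Φ : EuclideanSpace ℝ (Fin n) → IInt) (u : EuclideanSpace ℝ (Fin n))
    (G₁ G₂ : Fin n → IInt) (c₁ c₂ β : ℝ)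
    (h₁ : IsWeakSubgrad Y Φ u G₁ c₁) (h₂ : IsWeakSubgrad Y Φ u G₂ c₂)
    (hβ0 : 0 ≤ β) (hβ1 : β ≤ 1) :
    IsWeakSubgrad Y Φ u
      (fun i => IInt.add (IInt.smul β (G₁ i)) (IInt.smul (1 - β) (G₂ i)))
      (β * c₁ + (1 - β) * c₂) := by
  obtain ⟨hc₁, H₁⟩ := h₁
  obtain ⟨hc₂, H₂⟩ := h₂
  have hβ1' : 0 ≤ 1 - β := sub_nonneg.2 hβ1
  refine ⟨add_nonneg (mul_nonneg hβ0 hc₁) (mul_nonneg hβ1' hc₂), fun y hy => ?_⟩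
  rw [iprod_add, iprod_smul hβ0, iprod_smul hβ1', add_mul, mul_assoc, mul_assoc]
  exact ile_gH_ofReal_convex hβ0 hβ1 (H₁ y hy) (H₂ y hy)

/-- a convex combination of two gH-weak subgradients of `Φ` at `u` is again a
gH-weak subgradient of `Φ` at `u`; hence `∂ʷΦ(u)` is convex. -/
theorem stmt_10 {n : ℕ} (Y : Set (EuclideanSpace ℝ (Fin n))) (hY : Y.Nonempty)
    (Φ : EuclideanSpace ℝ (Fin n) → IInt) (u : EuclideanSpace ℝ (Fin n)) (hu : u ∈ Y)
    (G₁ G₂ : Fin n → IInt) (c₁ c₂ β : ℝ)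
    (h₁ : IsWeakSubgrad Y Φ u G₁ c₁) (h₂ : IsWeakSubgrad Y Φ u G₂ c₂)
    (hβ0 : 0 ≤ β) (hβ1 : β ≤ 1) :
    IsWeakSubgrad Y Φ u
      (fun i => IInt.add (IInt.smul β (G₁ i)) (IInt.smul (1 - β) (G₂ i)))
      (β * c₁ + (1 - β) * c₂) :=
  stmt_10_general Y Φ u G₁ G₂ c₁ c₂ β h₁ h₂ hβ0 hβ1
end

section
/- Let Y ⊆ ℝⁿ be nonempty, Ψ : Y → I(ℝ) an interval-valued function, and u ∈ Y. If {(Ĝₖ, cₖ)} is a sequence of gH-weak subgradients of Ψ at u such that cₖ → c in ℝ and, for each coordinate i, the lower and upper endpoints of the i-th component of Ĝₖ converge to the corresponding endpoints of an interval vector Ĝ ∈ I(ℝ)ⁿ, then (Ĝ, c) is a gH-weak subgradient of Ψ at u; hence ∂ʷΨ(u) is a closed set. -/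
/-! Every endpoint of both sides of the gH-weak subgradient inequality is built from the
endpoints of `Ĝ` and from `c` by sums, products, `min` and `max`, hence depends continuously
on them; and dominance is a pair of non-strict inequalities between endpoints, which survives
passage to the limit. -/

open Filter Topology

namespace IInt

def Tendsto {α : Type*} (X : α → IInt) (l : Filter α) (A : IInt) : Prop :=
  Filter.Tendsto (fun a => (X a).lo) l (𝓝 A.lo) ∧ Filter.Tendsto (fun a => (X a).hi) l (𝓝 A.hi)

variable {α : Type*} {l : Filter α}

theorem Tendsto.ofReal {r : α → ℝ} {s : ℝ} (h : Filter.Tendsto r l (𝓝 s)) :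
    IInt.Tendsto (fun a => ofReal (r a)) l (ofReal s) :=
  ⟨h, h⟩

theorem Tendsto.gH {X Y : α → IInt} {A B : IInt} (hX : IInt.Tendsto X l A)
    (hY : IInt.Tendsto Y l B) : IInt.Tendsto (fun a => gH (X a) (Y a)) l (gH A B) :=
  ⟨(hX.1.sub hY.1).min (hX.2.sub hY.2), (hX.1.sub hY.1).max (hX.2.sub hY.2)⟩

theorem Tendsto.iprod {n : ℕ} {Gk : α → Fin n → IInt}
    {G : Fin n → IInt} (hG : ∀ i, IInt.Tendsto (fun a => Gk a i) l (G i))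
    (d : EuclideanSpace ℝ (Fin n)) :
    IInt.Tendsto (fun a => iprod (Gk a) d) l (iprod G d) :=
  ⟨tendsto_finsetSum Finset.univ fun i _ => ((hG i).1.const_mul _).min ((hG i).2.const_mul _),
   tendsto_finsetSum Finset.univ fun i _ => ((hG i).1.const_mul _).max ((hG i).2.const_mul _)⟩

theorem ile_of_tendsto [l.NeBot] {X : α → IInt} {A B : IInt} (hX : IInt.Tendsto X l A)
    (h : ∀ᶠ a in l, ile (X a) B) : ile A B :=
  ⟨le_of_tendsto hX.1 (h.mono fun _ ha => ha.1), le_of_tendsto hX.2 (h.mono fun _ ha => ha.2)⟩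

end IInt

theorem stmt_11_general {n : ℕ} (Y : Set (EuclideanSpace ℝ (Fin n)))
    (Ψ : EuclideanSpace ℝ (Fin n) → IInt) (u : EuclideanSpace ℝ (Fin n))
    (Gk : ℕ → Fin n → IInt) (ck : ℕ → ℝ) (G : Fin n → IInt) (c : ℝ)
    (hsub : ∀ k, IsWeakSubgrad Y Ψ u (Gk k) (ck k))
    (hc : Filter.Tendsto ck Filter.atTop (nhds c))
    (hlo : ∀ i, Filter.Tendsto (fun k => (Gk k i).lo) Filter.atTop (nhds (G i).lo))
    (hhi : ∀ i, Filter.Tendsto (fun k => (Gk k i).hi) Filter.atTop (nhds (G i).hi)) :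
    IsWeakSubgrad Y Ψ u G c := by
  refine ⟨ge_of_tendsto' hc fun k => (hsub k).1, fun y hy => ?_⟩
  have hprod := IInt.Tendsto.iprod (fun i => ⟨hlo i, hhi i⟩) (y - u)
  have hlhs := hprod.gH (IInt.Tendsto.ofReal (hc.mul_const ‖y - u‖))
  exact IInt.ile_of_tendsto hlhs (Eventually.of_forall fun k => (hsub k).2 y hy)

/-- a limit of gH-weak subgradients of `Ψ` at `u` is again a gH-weak
subgradient of `Ψ` at `u`; hence `∂ʷΨ(u)` is closed. -/
theorem stmt_11 {n : ℕ} (Y : Set (EuclideanSpace ℝ (Fin n))) (hY : Y.Nonempty)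
    (Ψ : EuclideanSpace ℝ (Fin n) → IInt) (u : EuclideanSpace ℝ (Fin n)) (hu : u ∈ Y)
    (Gk : ℕ → Fin n → IInt) (ck : ℕ → ℝ) (G : Fin n → IInt) (c : ℝ)
    (hsub : ∀ k, IsWeakSubgrad Y Ψ u (Gk k) (ck k))
    (hc : Filter.Tendsto ck Filter.atTop (nhds c))
    (hlo : ∀ i, Filter.Tendsto (fun k => (Gk k i).lo) Filter.atTop (nhds (G i).lo))
    (hhi : ∀ i, Filter.Tendsto (fun k => (Gk k i).hi) Filter.atTop (nhds (G i).hi)) :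
    IsWeakSubgrad Y Ψ u G c :=
  stmt_11_general Y Ψ u Gk ck G c hsub hc hlo hhi
end

section
/- Let Y ⊆ ℝⁿ be nonempty, Φ : Y → I(ℝ) an interval-valued function, and u ∈ Y. If (Ĝ, c) is a gH-weak subgradient of Φ at u, then Φ is gH-lower Lipschitz at u with Lipschitz constant L = ‖Ĝ‖_{I(ℝ)ⁿ} + c, i.e., [−L‖y−u‖, −L‖y−u‖] ⪯ Φ(y) ⊖_gH Φ(u) for all y ∈ Y. -/
namespace IInt

lemma ile_trans {X Y Z : IInt} (hXY : ile X Y) (hYZ : ile Y Z) : ile X Z :=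
  ⟨hXY.1.trans hYZ.1, hXY.2.trans hYZ.2⟩

lemma ofReal_ile_of_le_lo {r : ℝ} {X : IInt} (h : r ≤ X.lo) : ile (ofReal r) X :=
  ⟨h, h.trans X.isLe⟩

lemma gH_ofReal_lo (X : IInt) (r : ℝ) : (gH X (ofReal r)).lo = X.lo - r :=
  min_eq_left (sub_le_sub_right X.isLe r)

lemma inorm_nonneg (X : IInt) : 0 ≤ inorm X :=
  le_max_of_le_left (abs_nonneg _)

lemma neg_inorm_mul_abs_le_smul_lo (t : ℝ) (X : IInt) : -(inorm X * |t|) ≤ (smul t X).lo := by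
  have bound : ∀ x, |x| ≤ inorm X → -(inorm X * |t|) ≤ t * x := fun x hx =>
    calc -(inorm X * |t|) ≤ -|t * x| := by
          rw [abs_mul, mul_comm]; exact neg_le_neg (mul_le_mul_of_nonneg_left hx (abs_nonneg t))
      _ ≤ t * x := neg_abs_le _
  exact le_min (bound _ (le_max_left _ _)) (bound _ (le_max_right _ _))

end IInt

lemma neg_sum_inorm_mul_norm_le_iprod_lo {n : ℕ} (G : Fin n → IInt)
    (d : EuclideanSpace ℝ (Fin n)) : -((∑ i, IInt.inorm (G i)) * ‖d‖) ≤ (iprod G d).lo :=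
  calc -((∑ i, IInt.inorm (G i)) * ‖d‖) = ∑ i, -(IInt.inorm (G i) * ‖d‖) := by
        rw [Finset.sum_mul, Finset.sum_neg_distrib]
    _ ≤ ∑ i, -(IInt.inorm (G i) * |d i|) := Finset.sum_le_sum fun i _ =>
        neg_le_neg (mul_le_mul_of_nonneg_left (by simpa using PiLp.norm_apply_le d i)
          (IInt.inorm_nonneg _))
    _ ≤ ∑ i, (IInt.smul (d i) (G i)).lo :=
        Finset.sum_le_sum fun i _ => IInt.neg_inorm_mul_abs_le_smul_lo _ _
    _ = (iprod G d).lo := rfl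

theorem stmt_13_general {n : ℕ} (Y : Set (EuclideanSpace ℝ (Fin n)))
    (Φ : EuclideanSpace ℝ (Fin n) → IInt) (u : EuclideanSpace ℝ (Fin n))
    (G : Fin n → IInt) (c : ℝ) (h : IsWeakSubgrad Y Φ u G c) :
    ∀ y ∈ Y, IInt.ile (IInt.ofReal (-(((∑ i, IInt.inorm (G i)) + c) * ‖y - u‖)))
      (IInt.gH (Φ y) (Φ u)) := by
  intro y hy
  refine IInt.ile_trans (IInt.ofReal_ile_of_le_lo ?_) (h.2 y hy)
  rw [IInt.gH_ofReal_lo]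
  linarith [neg_sum_inorm_mul_norm_le_iprod_lo G (y - u)]

/-- a gH-weak subgradient `(Ĝ, c)` of `Φ` at `u` makes `Φ` gH-lower Lipschitz
at `u` with constant `L = ‖Ĝ‖ + c`. -/
theorem stmt_13 {n : ℕ} (Y : Set (EuclideanSpace ℝ (Fin n))) (hY : Y.Nonempty)
    (Φ : EuclideanSpace ℝ (Fin n) → IInt) (u : EuclideanSpace ℝ (Fin n)) (hu : u ∈ Y)
    (G : Fin n → IInt) (c : ℝ) (h : IsWeakSubgrad Y Φ u G c) :
    ∀ y ∈ Y, IInt.ile (IInt.ofReal (-(((∑ i, IInt.inorm (G i)) + c) * ‖y - u‖)))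
      (IInt.gH (Φ y) (Φ u)) :=
  stmt_13_general Y Φ u G c h
end
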